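/- Let R, R_d : ℝ → ℝ^{3×3} be differentiable curves taking values in SO(3), and let Ω, Ω_d : ℝ → ℝ³ satisfy the kinematic equations R'(t) = R(t)·Ω̂(t) and R_d'(t) = R_d(t)·Ω̂_d(t) for all t. Define e_R(t) = (1/2)(R_d(t)ᵀR(t) − R(t)ᵀR_d(t))∨ and e_Ω(t) = Ω(t) − R(t)ᵀR_d(t)Ω_d(t). Then the function Ψ(t) = (1/2)tr(I − R_d(t)ᵀR(t)) is differentiable with Ψ'(t) = ⟨e_R(t), e_Ω(t)⟩ for all t. -/

import Mathlib

/-!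
With `Q = R_dᵀ R`, the kinematics give `Q' = Q Ω̂ - Ω̂_d Q`, and `tr (A x̂) = -⟨(A - Aᵀ)∨, x⟩`
turns `Ψ' = -½ tr Q'` into `⟨e_R, Ω⟩ - ⟨e_R, Ω_d⟩`. The last term is `⟨e_R, Qᵀ Ω_d⟩` because a
rotation fixes its axis `(Q - Qᵀ)∨`: `Q` commutes with `Q - Qᵀ = Q - Q⁻¹`, and conjugating a hat
matrix by a rotation rotates the vector, `(Q x)^ = Q x̂ Qᵀ`.
-/

open Matrix BigOperators

noncomputable def dot3 (a b : Fin 3 → ℝ) : ℝ := ∑ i, a i * b i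

/-- The hat map: `x̂ y = x × y`. -/
def hat (x : Fin 3 → ℝ) : Matrix (Fin 3) (Fin 3) ℝ :=
  !![0, -x 2, x 1; x 2, 0, -x 0; -x 1, x 0, 0]

/-- The vee map: inverse of the hat map, `S∨ = (S₃₂, S₁₃, S₂₁)`. -/
def vee (S : Matrix (Fin 3) (Fin 3) ℝ) : Fin 3 → ℝ := ![S 2 1, S 0 2, S 1 0]

lemma dot3_eq_dotProduct (a b : Fin 3 → ℝ) : dot3 a b = a ⬝ᵥ b := rfl

lemma hat_transpose (x : Fin 3 → ℝ) : (hat x)ᵀ = -hat x := by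
  ext i j; fin_cases i <;> fin_cases j <;> simp [hat]

lemma vee_hat (x : Fin 3 → ℝ) : vee (hat x) = x := by
  ext i; fin_cases i <;> simp [hat, vee]

lemma hat_vee_sub_transpose (A : Matrix (Fin 3) (Fin 3) ℝ) : hat (vee (A - Aᵀ)) = A - Aᵀ := by
  ext i j; fin_cases i <;> fin_cases j <;> simp [hat, vee]

lemma vee_smul (c : ℝ) (S : Matrix (Fin 3) (Fin 3) ℝ) : vee (c • S) = c • vee S := by
  ext i; fin_cases i <;> simp [vee]

lemma trace_mul_hat (A : Matrix (Fin 3) (Fin 3) ℝ) (x : Fin 3 → ℝ) :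
    trace (A * hat x) = -(vee (A - Aᵀ) ⬝ᵥ x) := by
  simp only [trace, diag_apply, mul_apply, hat, vee, dotProduct, Matrix.sub_apply,
    transpose_apply, of_apply, cons_val', cons_val_fin_one, cons_val_zero, cons_val_one, cons_val,
    Fin.sum_univ_three]
  ring

/-- `(A x) × (A y) = adj(A)ᵀ (x × y)`. -/
lemma hat_mulVec_mul (A : Matrix (Fin 3) (Fin 3) ℝ) (x : Fin 3 → ℝ) :
    hat (A *ᵥ x) * A = (adjugate A)ᵀ * hat x := by
  ext i j; fin_cases i <;> fin_cases j <;>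
    simp only [hat, adjugate_fin_three, mulVec, dotProduct, mul_apply, transpose_apply, of_apply,
      cons_val', cons_val_fin_one, cons_val_zero, cons_val_one, cons_val, Fin.sum_univ_three,
      Fin.zero_eta, Fin.mk_one, Fin.reduceFinMk, Fin.isValue] <;>
    ring

section SpecialOrthogonal

variable {A : Matrix (Fin 3) (Fin 3) ℝ}

lemma adjugate_eq_transpose_of_special_orthogonal (hA : Aᵀ * A = 1) (hdet : A.det = 1) :
    adjugate A = Aᵀ := by
  rw [← inv_eq_left_inv hA, inv_def, hdet, Ring.inverse_one, one_smul]

lemma hat_mulVec_mul_of_special_orthogonal (hA : Aᵀ * A = 1) (hdet : A.det = 1)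
    (x : Fin 3 → ℝ) : hat (A *ᵥ x) * A = A * hat x := by
  rw [hat_mulVec_mul, adjugate_eq_transpose_of_special_orthogonal hA hdet, transpose_transpose]

lemma mulVec_vee_sub_transpose (hA : Aᵀ * A = 1) (hdet : A.det = 1) :
    A *ᵥ vee (A - Aᵀ) = vee (A - Aᵀ) := by
  have hA' : A * Aᵀ = 1 := mul_eq_one_comm.mp hA
  have hcomm : A * (A - Aᵀ) = (A - Aᵀ) * A := by
    rw [Matrix.mul_sub, Matrix.sub_mul, hA, hA']
  have hhat : hat (A *ᵥ vee (A - Aᵀ)) = hat (vee (A - Aᵀ)) := by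
    have h := hat_mulVec_mul_of_special_orthogonal hA hdet (vee (A - Aᵀ))
    rw [hat_vee_sub_transpose, hcomm] at h
    rw [hat_vee_sub_transpose]
    simpa [Matrix.mul_assoc, hA'] using congrArg (· * Aᵀ) h
  simpa [vee_hat] using congrArg vee hhat

lemma neg_half_trace_mul_hat_sub_hat_mul (hA : Aᵀ * A = 1) (hdet : A.det = 1)
    (w v : Fin 3 → ℝ) :
    -(1 / 2) * trace (A * hat w - hat v * A) = vee ((1 / 2 : ℝ) • (A - Aᵀ)) ⬝ᵥ (w - Aᵀ *ᵥ v) := by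
  rw [trace_sub, trace_mul_comm (hat v), trace_mul_hat, trace_mul_hat, vee_smul, smul_dotProduct,
    dotProduct_sub, dotProduct_mulVec, vecMul_transpose, mulVec_vee_sub_transpose hA hdet,
    smul_eq_mul]
  ring

end SpecialOrthogonal

lemma HasDerivAt.trace_transpose_mul {m n : Type*} [Fintype m] [Fintype n]
    {A B : ℝ → Matrix m n ℝ} {A' B' : Matrix m n ℝ} {t : ℝ}
    (hA : ∀ i j, HasDerivAt (fun s => A s i j) (A' i j) t)
    (hB : ∀ i j, HasDerivAt (fun s => B s i j) (B' i j) t) :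
    HasDerivAt (fun s => trace ((A s)ᵀ * B s)) (trace (A'ᵀ * B t + (A t)ᵀ * B')) t := by
  have h := HasDerivAt.fun_sum fun j (_ : j ∈ Finset.univ) =>
    HasDerivAt.fun_sum fun i (_ : i ∈ Finset.univ) => (hA i j).mul (hB i j)
  simpa [trace, mul_apply, Finset.sum_add_distrib] using h

/-- Along curves `R, R_d` in SO(3) with kinematics `Ṙ = RΩ̂`,
`Ṙ_d = R_dΩ̂_d`, the error function `Ψ(t) = (1/2)tr(I − R_dᵀR)` satisfies
`Ψ'(t) = ⟨e_R(t), e_Ω(t)⟩`. -/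
theorem attitude_error_function_derivative
    (R Rd : ℝ → Matrix (Fin 3) (Fin 3) ℝ) (Ω Ωd : ℝ → Fin 3 → ℝ)
    (hRso : ∀ t, (R t)ᵀ * R t = 1 ∧ (R t).det = 1)
    (hRdso : ∀ t, (Rd t)ᵀ * Rd t = 1 ∧ (Rd t).det = 1)
    (hR : ∀ t, ∀ i j, HasDerivAt (fun s => R s i j) ((R t * hat (Ω t)) i j) t)
    (hRd : ∀ t, ∀ i j, HasDerivAt (fun s => Rd s i j) ((Rd t * hat (Ωd t)) i j) t)
    (eR : ℝ → Fin 3 → ℝ)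
    (heR : ∀ t, eR t = vee ((1 / 2 : ℝ) • ((Rd t)ᵀ * R t - (R t)ᵀ * Rd t)))
    (eΩ : ℝ → Fin 3 → ℝ)
    (heΩ : ∀ t, eΩ t = Ω t - ((R t)ᵀ * Rd t) *ᵥ Ωd t)
    (Ψ : ℝ → ℝ)
    (hΨ : ∀ t, Ψ t = (1 / 2) * Matrix.trace ((1 : Matrix (Fin 3) (Fin 3) ℝ) - (Rd t)ᵀ * R t)) :
    ∀ t, HasDerivAt Ψ (dot3 (eR t) (eΩ t)) t := by
  intro t
  obtain ⟨hR1, hRdet⟩ := hRso t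
  obtain ⟨hRd1, hRddet⟩ := hRdso t
  have hRtRd : (R t)ᵀ * Rd t = ((Rd t)ᵀ * R t)ᵀ := by rw [transpose_mul, transpose_transpose]
  rw [heR t, heΩ t, hRtRd]
  set Q := (Rd t)ᵀ * R t with hQ
  have hQ1 : Qᵀ * Q = 1 := by
    rw [transpose_mul, transpose_transpose, Matrix.mul_assoc, ← Matrix.mul_assoc (Rd t),
      mul_eq_one_comm.mp hRd1, Matrix.one_mul, hR1]
  have hQdet : Q.det = 1 := by rw [det_mul, det_transpose, hRdet, hRddet, mul_one]
  -- `Q' = Q Ω̂ - Ω̂_d Q` along the kinematics.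
  have hQ' : (Rd t * hat (Ωd t))ᵀ * R t + (Rd t)ᵀ * (R t * hat (Ω t)) =
      Q * hat (Ω t) - hat (Ωd t) * Q := by
    simp only [hQ, transpose_mul, hat_transpose, Matrix.neg_mul, Matrix.mul_assoc]
    abel
  have hΨeq :
      Ψ = fun s => 1 / 2 * (trace (1 : Matrix (Fin 3) (Fin 3) ℝ) - trace ((Rd s)ᵀ * R s)) := by
    funext s; rw [hΨ, trace_sub]
  rw [hΨeq, dot3_eq_dotProduct, ← neg_half_trace_mul_hat_sub_hat_mul hQ1 hQdet, ← hQ']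
  exact (((HasDerivAt.trace_transpose_mul (hRd t) (hR t)).const_sub _).const_mul _).congr_deriv
    (by ring)
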